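/- Let T^n(A) := A ⊗_ℚ ⋯ ⊗_ℚ A (n factors, i.e., the PiTensorProduct over Fin n of copies of A) with its commutative ℚ-algebra structure, and for i ∈ Fin n and a ∈ A let ι_i(a) ∈ T^n(A) denote the pure tensor with a in slot i and 1 in all other slots. Let F : T^n(A) → B be a ℚ-algebra homomorphism and define the ℚ-linear map f_F : A → B by f_F(a) = Σ_{i ∈ Fin n} F(ι_i(a)). Then the characteristic function of f_F is obtained by applying F coefficientwise to the product ∏_{i ∈ Fin n} (1 + ι_i(a)·T) ∈ T^n(A)[[T]]; that is, R(f_F, a) = Σ_{k=0}^{n} F(σ_k(a))·T^k, where σ_k(a) := Σ over k-element subsets S ⊆ Fin n of the pure tensor with a in the slots of S and 1 elsewhere. -/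

import Mathlib

open PowerSeries

noncomputable def logOneAdd {A : Type*} [CommRing A] [Algebra ℚ A] (a : A) : PowerSeries A :=
  PowerSeries.mk fun k => ((-1 : ℚ) ^ (k + 1) / k) • a ^ k

noncomputable def mapCoeff {A B : Type*} [CommRing A] [CommRing B] [Algebra ℚ A] [Algebra ℚ B]
    (f : A →ₗ[ℚ] B) (p : PowerSeries A) : PowerSeries B :=
  PowerSeries.mk fun k => f (PowerSeries.coeff k p)

noncomputable def expPS {B : Type*} [CommRing B] [Algebra ℚ B] (p : PowerSeries B) : PowerSeries B :=
  PowerSeries.mk fun k => ∑ m ∈ Finset.range (k + 1),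
    ((m.factorial : ℚ)⁻¹) • PowerSeries.coeff k (p ^ m)

noncomputable def charFun {A B : Type*} [CommRing A] [CommRing B] [Algebra ℚ A] [Algebra ℚ B]
    (f : A →ₗ[ℚ] B) (a : A) : PowerSeries B :=
  expPS (mapCoeff f (logOneAdd a))

noncomputable def psi {A B : Type*} [CommRing A] [CommRing B] [Algebra ℚ A] [Algebra ℚ B]
    (f : A →ₗ[ℚ] B) (a : A) (k : ℕ) : B :=
  PowerSeries.coeff k (charFun f a)

def IsNHom {A B : Type*} [CommRing A] [CommRing B] [Algebra ℚ A] [Algebra ℚ B]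
    (f : A →ₗ[ℚ] B) (n : ℕ) : Prop :=
  f 1 = n • (1 : B) ∧ ∀ k, n + 1 ≤ k → ∀ a : A, psi f a k = 0

noncomputable def frob {A B : Type*} [CommRing A] [CommRing B] [Algebra ℚ A] [Algebra ℚ B]
    (f : A →ₗ[ℚ] B) : (k : ℕ) → (Fin k → A) → B
  | 0, _ => 1
  | k + 1, a =>
      f (a (Fin.last k)) * frob f k (fun i => a i.castSucc)
        - ∑ i : Fin k, frob f k
            (Function.update (fun j : Fin k => a j.castSucc) i (a i.castSucc * a (Fin.last k)))

open scoped TensorProduct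

/-- The pure tensor with `a` in slot `i` and `1` in all other slots, as a linear map. -/
noncomputable def iota {A : Type*} [CommRing A] [Algebra ℚ A] (n : ℕ) (i : Fin n) :
    A →ₗ[ℚ] (⨂[ℚ] (_ : Fin n), A) :=
  (PiTensorProduct.tprod ℚ (s := fun _ : Fin n => A)).toLinearMap (fun _ => 1) i

/-- The `n`-homomorphism `f_F(a) = Σ_i F(ι_i(a))` associated to an algebra
homomorphism `F : T^n(A) → B`. -/
noncomputable def fF {A B : Type*} [CommRing A] [CommRing B] [Algebra ℚ A] [Algebra ℚ B]
    (n : ℕ) (F : (⨂[ℚ] (_ : Fin n), A) →ₐ[ℚ] B) : A →ₗ[ℚ] B :=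
  ∑ i : Fin n, F.toLinearMap ∘ₗ iota n i

/-- `σ_k(a)`: the sum over `k`-element subsets `S ⊆ Fin n` of the pure tensor with
`a` in the slots of `S` and `1` elsewhere. -/
noncomputable def sigmaTensor {A : Type*} [CommRing A] [Algebra ℚ A] (n k : ℕ) (a : A) :
    ⨂[ℚ] (_ : Fin n), A :=
  ∑ S ∈ Finset.powersetCard k (Finset.univ : Finset (Fin n)),
    PiTensorProduct.tprod ℚ (fun i => if i ∈ S then a else 1)

/-!
Every `F ∘ ι_i` is a ring homomorphism, so `f_F = Σ_i F ∘ ι_i` sends `log(1 + aT)` to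
`Σ_i log(1 + c_i T)` with `c_i = F(ι_i(a))`. The exponential of this sum is `∏_i (1 + c_i T)`:
both series have constant term `1` and satisfy `y' = (Σ_i log(1 + c_i T)') y`, because
`log(1 + cT)' · (1 + cT) = c`, and over a `ℚ`-algebra this linear ODE has a unique solution.
Expanding the product in elementary symmetric functions of the `ι_i(a)` yields the `σ_k(a)`.
-/

open Finset

theorem coeff_pow_eq_zero_of_lt {R : Type*} [Semiring R] {p : R⟦X⟧} (hp : constantCoeff p = 0)
    {k m : ℕ} (hkm : k < m) : coeff k (p ^ m) = 0 :=
  coeff_of_lt_order k <|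
    (Nat.cast_lt.2 hkm).trans_le (le_order_pow_of_constantCoeff_eq_zero m hp)

theorem eq_of_derivative_eq_mul_self {R : Type*} [CommRing R] [IsAddTorsionFree R]
    {r y z : R⟦X⟧} (hz : IsUnit z) (hy : d⁄dX R y = r * y) (hz' : d⁄dX R z = r * z)
    (h0 : constantCoeff y = constantCoeff z) : y = z := by
  obtain ⟨u, rfl⟩ := hz
  rw [← Units.mul_inv_eq_one]
  apply derivative.ext
  · rw [Derivation.leibniz, derivative_inv, hy, hz', derivative_one, smul_eq_mul, smul_eq_mul]
    linear_combination (-(r * y * ↑u⁻¹)) * u.inv_mul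
  · rw [map_mul, h0, ← map_mul, Units.mul_inv, map_one]

section ExpLog

variable {B : Type*} [CommRing B] [Algebra ℚ B]

theorem expPS_eq_exp_subst {p : B⟦X⟧} (hp : constantCoeff p = 0) :
    expPS p = (exp B).subst p := by
  ext k
  rw [expPS, coeff_mk, coeff_subst' (HasSubst.of_constantCoeff_zero' hp),
    finsum_eq_sum_of_support_subset (s := range (k + 1))]
  · refine sum_congr rfl fun m _ => ?_
    rw [coeff_exp, algebraMap_smul, one_div]
  · refine Function.support_subset_iff'.2 fun m hm => ?_
    simp only [coeff_pow_eq_zero_of_lt hp (by simpa using hm), smul_zero]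

theorem constantCoeff_expPS (p : B⟦X⟧) : constantCoeff (expPS p) = 1 := by
  simp [expPS]

theorem derivative_expPS {p : B⟦X⟧} (hp : constantCoeff p = 0) :
    d⁄dX B (expPS p) = d⁄dX B p * expPS p := by
  rw [expPS_eq_exp_subst hp, derivative_subst (HasSubst.of_constantCoeff_zero' hp),
    derivative_exp, mul_comm]

theorem constantCoeff_logOneAdd (c : B) : constantCoeff (logOneAdd c) = 0 := by
  simp [logOneAdd]

theorem coeff_derivative_logOneAdd (c : B) (k : ℕ) :
    coeff k (d⁄dX B (logOneAdd c)) = ((-1 : ℚ) ^ k) • c ^ (k + 1) := by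
  rw [coeff_derivative, logOneAdd, coeff_mk, ← Nat.cast_succ, mul_comm, ← nsmul_eq_mul,
    ← Nat.cast_smul_eq_nsmul ℚ, smul_smul]
  congr 1
  field_simp
  ring

theorem derivative_logOneAdd_mul_one_add_C_mul_X (c : B) :
    d⁄dX B (logOneAdd c) * (1 + C c * X) = C c := by
  rw [mul_one_add, ← mul_assoc]
  ext (_ | k)
  · rw [map_add, coeff_zero_mul_X, add_zero, coeff_derivative_logOneAdd, coeff_C, if_pos rfl,
      pow_zero, one_smul, pow_one]
  · rw [map_add, coeff_succ_mul_X, coeff_mul_C,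
      coeff_derivative_logOneAdd, coeff_derivative_logOneAdd, coeff_C, if_neg k.succ_ne_zero,
      smul_mul_assoc, ← pow_succ, pow_succ (-1 : ℚ), mul_neg_one, neg_smul, neg_add_cancel]

theorem derivative_prod_one_add_C_mul_X {ι : Type*} (s : Finset ι) (c : ι → B) :
    d⁄dX B (∏ i ∈ s, (1 + C (c i) * X)) =
      (∑ i ∈ s, d⁄dX B (logOneAdd (c i))) * ∏ i ∈ s, (1 + C (c i) * X) := by
  classical
  induction s using Finset.induction_on with
  | empty => simp
  | insert j s hj ih =>
    have hj' : d⁄dX B (1 + C (c j) * X) = C (c j) := by simp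
    rw [prod_insert hj, sum_insert hj, Derivation.leibniz, ih, hj', smul_eq_mul, smul_eq_mul]
    linear_combination
      (-∏ i ∈ s, (1 + C (c i) * X)) * derivative_logOneAdd_mul_one_add_C_mul_X (c j)

theorem expPS_sum_logOneAdd {ι : Type*} (s : Finset ι) (c : ι → B) :
    expPS (∑ i ∈ s, logOneAdd (c i)) = ∏ i ∈ s, (1 + C (c i) * X) := by
  have : IsAddTorsionFree B := .of_module_rat B
  have hlog : constantCoeff (∑ i ∈ s, logOneAdd (c i)) = 0 := by
    simp [constantCoeff_logOneAdd]
  have hprod : constantCoeff (∏ i ∈ s, (1 + C (c i) * X)) = 1 := by simp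
  refine eq_of_derivative_eq_mul_self ?_ (derivative_expPS hlog)
    (by rw [derivative_prod_one_add_C_mul_X, map_sum]) (by rw [constantCoeff_expPS, hprod])
  rw [isUnit_iff_constantCoeff, hprod]
  exact isUnit_one

end ExpLog

section MapCoeff

variable {A B : Type*} [CommRing A] [CommRing B] [Algebra ℚ A] [Algebra ℚ B]

theorem mapCoeff_sum {ι : Type*} (s : Finset ι) (f : ι → A →ₗ[ℚ] B) (p : A⟦X⟧) :
    mapCoeff (∑ i ∈ s, f i) p = ∑ i ∈ s, mapCoeff (f i) p := by
  ext k
  simp [mapCoeff]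

theorem mapCoeff_toLinearMap (φ : A →ₐ[ℚ] B) (p : A⟦X⟧) :
    mapCoeff φ.toLinearMap p = map (φ : A →+* B) p := by
  ext k
  simp [mapCoeff]

theorem mapCoeff_logOneAdd (φ : A →ₐ[ℚ] B) (a : A) :
    mapCoeff φ.toLinearMap (logOneAdd a) = logOneAdd (φ a) := by
  ext k
  simp [mapCoeff, logOneAdd]

theorem charFun_sum_algHom {ι : Type*} (s : Finset ι) (φ : ι → A →ₐ[ℚ] B) (a : A) :
    charFun (∑ i ∈ s, (φ i).toLinearMap) a = ∏ i ∈ s, (1 + C (φ i a) * X) := by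
  simp only [charFun, mapCoeff_sum, mapCoeff_logOneAdd, expPS_sum_logOneAdd]

end MapCoeff

theorem prod_one_add_C_mul_X {R ι : Type*} [CommRing R] [Fintype ι] (c : ι → R) :
    ∏ i, (1 + C (c i) * X) =
      ∑ k ∈ range (Fintype.card ι + 1),
        monomial k (∑ S ∈ powersetCard k univ, ∏ i ∈ S, c i) := by
  rw [prod_one_add, sum_powerset, card_univ]
  refine sum_congr rfl fun k _ => ?_
  rw [map_sum]
  refine sum_congr rfl fun S hS => ?_
  rw [prod_mul_distrib, prod_const, ← map_prod, (mem_powersetCard.1 hS).2,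
    monomial_eq_C_mul_X_pow]

section Tensor

variable {A : Type*} [CommRing A] [Algebra ℚ A]

theorem iota_eq_singleAlgHom (n : ℕ) (i : Fin n) :
    iota n i = (PiTensorProduct.singleAlgHom (R := ℚ) (A := fun _ : Fin n => A) i).toLinearMap :=
  rfl

theorem sigmaTensor_eq_sum_prod_iota (n k : ℕ) (a : A) :
    sigmaTensor n k a = ∑ S ∈ powersetCard k univ, ∏ i ∈ S, iota n i a := by
  refine sum_congr rfl fun S _ => ?_
  simp [iota_eq_singleAlgHom, ← PiTensorProduct.tprod_prod, Finset.prod_fn]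

end Tensor

theorem fF_eq_sum_algHom {A B : Type*} [CommRing A] [CommRing B] [Algebra ℚ A] [Algebra ℚ B]
    (n : ℕ) (F : (⨂[ℚ] (_ : Fin n), A) →ₐ[ℚ] B) :
    fF n F = ∑ i, (F.comp (PiTensorProduct.singleAlgHom i)).toLinearMap := by
  simp only [fF, iota_eq_singleAlgHom, AlgHom.comp_toLinearMap]

/-- the characteristic function of `f_F` is obtained by applying `F`
coefficientwise to `∏_{i} (1 + ι_i(a)·T)`, i.e. `R(f_F,a) = Σ_{k=0}^{n} F(σ_k(a))·T^k`. -/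
theorem stmt13 {A B : Type*} [CommRing A] [CommRing B] [Algebra ℚ A] [Algebra ℚ B]
    (n : ℕ) (F : (⨂[ℚ] (_ : Fin n), A) →ₐ[ℚ] B) (a : A) :
    charFun (fF n F) a =
      mapCoeff F.toLinearMap
        (∏ i : Fin n,
          (1 + PowerSeries.C (iota n i a) * PowerSeries.X)) ∧
    charFun (fF n F) a =
      ∑ k ∈ Finset.range (n + 1), PowerSeries.monomial k (F (sigmaTensor n k a)) := by
  have hprod : charFun (fF n F) a = ∏ i, (1 + C (F (iota n i a)) * X) := by
    rw [fF_eq_sum_algHom, charFun_sum_algHom]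
    rfl
  refine ⟨?_, ?_⟩
  · rw [hprod, mapCoeff_toLinearMap, map_prod]
    simp
  · rw [hprod, prod_one_add_C_mul_X, Fintype.card_fin]
    simp only [sigmaTensor_eq_sum_prod_iota, map_sum, map_prod]
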